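/- For every odd natural number m and natural number n, the set of functions f: [n] → [m] is in bijection with the set of pairs (P, c), where P is a signed partition of [±n] with some number k of pairs of nonzero blocks satisfying 2k < m, and c is a choice sequence in Π_{j=1}^{k} (m - (2j-1)) options; consequently m^n = Σ_{k} S_B(n,k)·(m-1)(m-3)⋯(m-2k+1). -/

import Mathlib

open Finset

/-- The set `[±n] = {±1, …, ±n}` as a finset of integers. -/
noncomputable def pmSet (n : ℕ) : Finset ℤ := (Finset.Icc (-(n:ℤ)) (n:ℤ)).erase 0

/-- Negation of a set: `-C`. -/
def negSet (C : Finset ℤ) : Finset ℤ := C.image (fun x => -x)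

/-- A signed partition of `[±n]`: a set partition of `[±n]` closed under block
negation, with at most one self-negative block (the zero-block). -/
def IsSignedPartition (n : ℕ) (P : Finpartition (pmSet n)) : Prop :=
  (∀ C ∈ P.parts, negSet C ∈ P.parts) ∧
  (P.parts.filter (fun C => negSet C = C)).card ≤ 1

/-- `SB n k`: the type-B Stirling number of the second kind, i.e. the number of
signed partitions of `[±n]` with exactly `k` pairs of nonzero blocks. -/
noncomputable def SB (n k : ℕ) : ℕ :=
  Nat.card {P : Finpartition (pmSet n) //
    IsSignedPartition n P ∧ (P.parts.filter (fun C => negSet C ≠ C)).card = 2 * k}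

/-- The number of pairs of nonzero blocks of a partition of `[±n]`. -/
def pairsCount (n : ℕ) (P : Finpartition (pmSet n)) : ℕ :=
  (P.parts.filter (fun C => negSet C ≠ C)).card / 2

/-!
Write `m = 2t + 1` and number the urns `-t, …, t`. A placement `f` of the balls `1, …, n`
extends to an odd map on `[±n]` (ball `-i` goes to urn `-f i`), and the fibres of this map form a
signed partition of `[±n]`: the zero block is the fibre over urn `0`, and the fibres over `v` and
`-v` form a pair of nonzero blocks. Conversely, choose one block out of each of the `k` pairs of a
signed partition `P`; a placement inducing `P` is determined by the urns of the chosen blocks, and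
these can be any nonzero urns of pairwise distinct absolute values, so there are
`2^k · t(t-1)⋯(t-k+1) = (m-1)(m-3)⋯(m-2k+1)` of them. Summing over `P` gives `m^n`, grouping by
`k` gives the identity for `S_B`, and the bijection follows by counting.
-/

instance Setoid.decidableRelKer {α β : Type*} [DecidableEq β] (g : α → β) :
    DecidableRel (Setoid.ker g) :=
  fun a b => decEq (g a) (g b)

namespace Finpartition

variable {α : Type*} [DecidableEq α] {s : Finset α}

theorem eq_of_forall_part_eq {P Q : Finpartition s} (h : ∀ a ∈ s, P.part a = Q.part a) :
    P = Q := by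
  suffices key : ∀ {P Q : Finpartition s}, (∀ a ∈ s, P.part a = Q.part a) → P.parts ⊆ Q.parts from
    Finpartition.ext (key h |>.antisymm (key fun a ha => (h a ha).symm))
  intro P Q h C hC
  obtain ⟨a, ha⟩ := P.nonempty_of_mem_parts hC
  have has : a ∈ s := P.le hC ha
  rw [← P.part_eq_of_mem hC ha, h a has]
  exact Q.part_mem.2 has

theorem ofSetSetoid_ker_eq_iff {β : Type*} [DecidableEq β] {g : α → β} {P : Finpartition s} :
    ofSetSetoid (Setoid.ker g) s = P ↔ ∀ a ∈ s, ∀ b ∈ s, (g a = g b ↔ P.part a = P.part b) := by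
  have hpart : ∀ a ∈ s, ∀ b ∈ s, (b ∈ (ofSetSetoid (Setoid.ker g) s).part a ↔ g a = g b) :=
    fun a ha b hb => by simp [mem_part_ofSetSetoid_iff_rel, Setoid.ker_def, ha, hb]
  constructor
  · rintro rfl a ha b hb
    rw [← hpart a ha b hb, mem_part_iff_part_eq_part _ hb ha, eq_comm]
  · intro h
    refine eq_of_forall_part_eq fun a ha => ?_
    ext b
    by_cases hb : b ∈ s
    · rw [hpart a ha b hb, h a ha b hb, mem_part_iff_part_eq_part _ hb ha, eq_comm]
    · exact iff_of_false (fun h' => hb (part_subset _ _ h')) (fun h' => hb (part_subset _ _ h'))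

end Finpartition

variable {n t : ℕ}

theorem mem_pmSet {x : ℤ} : x ∈ pmSet n ↔ x ≠ 0 ∧ x.natAbs ≤ n := by
  simp only [pmSet, mem_erase, mem_Icc]
  omega

theorem neg_mem_pmSet {x : ℤ} : -x ∈ pmSet n ↔ x ∈ pmSet n := by
  simp [mem_pmSet]

theorem card_pmSet (n : ℕ) : (pmSet n).card = 2 * n := by
  rw [pmSet, card_erase_of_mem (by simp), Int.card_Icc]
  omega

theorem mem_negSet {C : Finset ℤ} {x : ℤ} : x ∈ negSet C ↔ -x ∈ C := by
  simp only [negSet, mem_image]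
  exact ⟨by rintro ⟨y, hy, rfl⟩; simpa, fun h => ⟨-x, h, neg_neg x⟩⟩

@[simp]
theorem negSet_negSet (C : Finset ℤ) : negSet (negSet C) = C := by
  ext; simp [mem_negSet]

theorem IsSignedPartition.part_neg {P : Finpartition (pmSet n)} (hP : IsSignedPartition n P)
    {x : ℤ} (hx : x ∈ pmSet n) : P.part (-x) = negSet (P.part x) :=
  P.part_eq_of_mem (hP.1 _ (P.part_mem.2 hx)) (by simpa [mem_negSet] using P.mem_part hx)

section OddExtension

def oddExtension (f : Fin n → Icc (-(t : ℤ)) t) (x : ℤ) : ℤ :=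
  if h : x.natAbs - 1 < n then x.sign * f ⟨x.natAbs - 1, h⟩ else 0

variable {f : Fin n → Icc (-(t : ℤ)) t}

theorem oddExtension_neg (x : ℤ) : oddExtension f (-x) = -oddExtension f x := by
  simp only [oddExtension, Int.natAbs_neg, Int.sign_neg]
  split <;> ring

theorem oddExtension_natCast_add_one (i : Fin n) : oddExtension f (i + 1) = f i := by
  have hi : ((i : ℤ) + 1).natAbs - 1 = i := by omega
  simp only [oddExtension, hi, i.isLt, dite_true]
  rw [Int.sign_eq_one_of_pos (by omega), one_mul]

theorem abs_oddExtension_le (x : ℤ) : |oddExtension f x| ≤ t := by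
  unfold oddExtension
  split
  · rw [abs_mul]
    have h := (mem_Icc.1 (f ⟨x.natAbs - 1, ‹_›⟩).2)
    rcases Int.sign_trichotomy x with h' | h' | h' <;> simp only [h'] <;> simp [abs_le] <;> omega
  · simp

theorem oddExtension_eq_of_odd {g : ℤ → ℤ} (hg : ∀ x ∈ pmSet n, g (-x) = -g x)
    (hf : ∀ i, (f i : ℤ) = g (i + 1)) {x : ℤ} (hx : x ∈ pmSet n) : oddExtension f x = g x := by
  have hpos : ∀ x ∈ pmSet n, 0 < x → oddExtension f x = g x := fun x hx hx0 => by
    obtain ⟨i, rfl⟩ : ∃ i : Fin n, (i : ℤ) + 1 = x :=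
      ⟨⟨x.toNat - 1, by have := (mem_pmSet.1 hx).2; omega⟩, by simp; omega⟩
    rw [oddExtension_natCast_add_one, hf]
  rcases lt_or_gt_of_ne (mem_pmSet.1 hx).1 with hneg | h
  · rw [← neg_neg x, oddExtension_neg, hg _ (neg_mem_pmSet.2 hx),
      hpos _ (neg_mem_pmSet.2 hx) (by omega)]
  · exact hpos x hx h

/-- The zero block is `f⁻¹(0) ∪ -f⁻¹(0)`, the other blocks come in pairs `f⁻¹(v) ∪ -f⁻¹(-v)`. -/
noncomputable def kerPartition (f : Fin n → Icc (-(t : ℤ)) t) : Finpartition (pmSet n) :=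
  Finpartition.ofSetSetoid (Setoid.ker (oddExtension f)) (pmSet n)

theorem kerPartition_eq_iff {P : Finpartition (pmSet n)} : kerPartition f = P ↔
    ∀ x ∈ pmSet n, ∀ y ∈ pmSet n, (oddExtension f x = oddExtension f y ↔ P.part x = P.part y) :=
  Finpartition.ofSetSetoid_ker_eq_iff

theorem mem_part_kerPartition {x y : ℤ} :
    y ∈ (kerPartition f).part x ↔
      x ∈ pmSet n ∧ y ∈ pmSet n ∧ oddExtension f x = oddExtension f y := by
  rw [kerPartition, Finpartition.mem_part_ofSetSetoid_iff_rel, Setoid.ker_def]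

theorem negSet_part_kerPartition (x : ℤ) :
    negSet ((kerPartition f).part x) = (kerPartition f).part (-x) := by
  ext y
  simp only [mem_negSet, mem_part_kerPartition, neg_mem_pmSet, oddExtension_neg, neg_eq_iff_eq_neg]

theorem oddExtension_eq_zero_of_negSet_part_eq {x : ℤ} (hx : x ∈ pmSet n)
    (h : negSet ((kerPartition f).part x) = (kerPartition f).part x) : oddExtension f x = 0 := by
  have hneg : -x ∈ (kerPartition f).part x := by
    rw [← h, mem_negSet, neg_neg]
    exact Finpartition.mem_part _ hx
  have := (mem_part_kerPartition.1 hneg).2.2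
  rw [oddExtension_neg] at this
  omega

theorem isSignedPartition_kerPartition (f : Fin n → Icc (-(t : ℤ)) t) :
    IsSignedPartition n (kerPartition f) := by
  set Q := kerPartition f
  refine ⟨fun C hC => ?_, card_le_one.2 fun C hC D hD => ?_⟩
  · obtain ⟨x, hx⟩ := Q.nonempty_of_mem_parts hC
    rw [← Q.part_eq_of_mem hC hx, negSet_part_kerPartition]
    exact Q.part_mem.2 (neg_mem_pmSet.2 (Q.le hC hx))
  · simp only [mem_filter] at hC hD
    obtain ⟨x, hx⟩ := Q.nonempty_of_mem_parts hC.1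
    obtain ⟨y, hy⟩ := Q.nonempty_of_mem_parts hD.1
    have hxs := Q.le hC.1 hx
    have hys := Q.le hD.1 hy
    obtain rfl := Q.part_eq_of_mem hC.1 hx
    obtain rfl := Q.part_eq_of_mem hD.1 hy
    refine Q.part_eq_of_mem (Q.part_mem.2 hys) ?_
    rw [mem_part_kerPartition, oddExtension_eq_zero_of_negSet_part_eq hxs hC.2,
      oddExtension_eq_zero_of_negSet_part_eq hys hD.2]
    exact ⟨hys, hxs, rfl⟩

end OddExtension

section Blocks

variable {P : Finpartition (pmSet n)} {C : Finset ℤ}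

def nonzeroBlocks (P : Finpartition (pmSet n)) : Finset (Finset ℤ) :=
  P.parts.filter fun C => negSet C ≠ C

theorem mem_nonzeroBlocks : C ∈ nonzeroBlocks P ↔ C ∈ P.parts ∧ negSet C ≠ C :=
  mem_filter

def IsPositiveBlock (C : Finset ℤ) : Prop :=
  ∃ x ∈ C, 0 < x ∧ ∀ y ∈ C, x ≤ |y|

instance : DecidablePred IsPositiveBlock := fun C => by
  unfold IsPositiveBlock; infer_instance

/-- One block out of each pair `{C, -C}` of nonzero blocks (see `isPositiveBlock_negSet_iff`). -/
def positiveBlocks (P : Finpartition (pmSet n)) : Finset (Finset ℤ) :=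
  (nonzeroBlocks P).filter IsPositiveBlock

theorem negSet_mem_nonzeroBlocks (hP : IsSignedPartition n P) (hC : C ∈ nonzeroBlocks P) :
    negSet C ∈ nonzeroBlocks P := by
  rw [mem_nonzeroBlocks] at hC ⊢
  exact ⟨hP.1 C hC.1, by rw [negSet_negSet]; exact hC.2.symm⟩

theorem isPositiveBlock_negSet_iff (hP : IsSignedPartition n P) (hC : C ∈ nonzeroBlocks P) :
    IsPositiveBlock (negSet C) ↔ ¬ IsPositiveBlock C := by
  rw [mem_nonzeroBlocks] at hC
  constructor
  · rintro ⟨x, hx, hx0, hxmin⟩ ⟨y, hy, hy0, hymin⟩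
    have hxy : x = y := le_antisymm
      (by simpa [abs_of_pos hy0] using hxmin (-y) (by rwa [mem_negSet, neg_neg]))
      (by simpa [abs_of_pos hx0] using hymin (-x) (mem_negSet.1 hx))
    subst hxy
    exact disjoint_left.1 (P.disjoint hC.1 (hP.1 C hC.1) hC.2.symm) hy hx
  · intro hCpos
    obtain ⟨x, hx, hmin⟩ := exists_min_image C (|·|) (P.nonempty_of_mem_parts hC.1)
    have hx0 : x ≠ 0 := (mem_pmSet.1 (P.le hC.1 hx)).1
    have hneg : x < 0 := by
      by_contra! hpos
      exact hCpos ⟨x, hx, lt_of_le_of_ne hpos hx0.symm, fun y hy => abs_of_nonneg hpos ▸ hmin y hy⟩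
    refine ⟨-x, by rwa [mem_negSet, neg_neg], neg_pos.2 hneg, fun y hy => ?_⟩
    simpa [abs_of_neg hneg] using hmin (-y) (mem_negSet.1 hy)

theorem mem_nonzeroBlocks_of_mem_positiveBlocks (h : C ∈ positiveBlocks P) :
    C ∈ nonzeroBlocks P :=
  (mem_filter.1 h).1

theorem not_mem_positiveBlocks_of_negSet_eq (h : negSet C = C) : C ∉ positiveBlocks P :=
  fun hC => (mem_nonzeroBlocks.1 (mem_nonzeroBlocks_of_mem_positiveBlocks hC)).2 h

theorem negSet_mem_positiveBlocks_iff (hP : IsSignedPartition n P) (hC : C ∈ nonzeroBlocks P) :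
    negSet C ∈ positiveBlocks P ↔ C ∉ positiveBlocks P := by
  simp only [positiveBlocks, mem_filter, negSet_mem_nonzeroBlocks hP hC, hC, true_and,
    isPositiveBlock_negSet_iff hP hC]

theorem card_nonzeroBlocks (hP : IsSignedPartition n P) :
    (nonzeroBlocks P).card = 2 * (positiveBlocks P).card := by
  have hneg : ((nonzeroBlocks P).filter fun C => ¬ IsPositiveBlock C).card =
      (positiveBlocks P).card := by
    refine card_nbij' negSet negSet (fun C hC => ?_) (fun C hC => ?_) (fun C _ => negSet_negSet C)
      (fun C _ => negSet_negSet C)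
    · rw [mem_coe, mem_filter] at hC
      exact (negSet_mem_positiveBlocks_iff hP hC.1).2 fun h => hC.2 (mem_filter.1 h).2
    · rw [mem_coe, positiveBlocks, mem_filter] at hC
      rw [mem_coe, mem_filter]
      exact ⟨negSet_mem_nonzeroBlocks hP hC.1,
        fun h => (isPositiveBlock_negSet_iff hP hC.1).1 h hC.2⟩
  rw [← card_filter_add_card_filter_not IsPositiveBlock, hneg, positiveBlocks]
  ring

theorem pairsCount_eq_card_positiveBlocks (hP : IsSignedPartition n P) :
    pairsCount n P = (positiveBlocks P).card := by
  rw [pairsCount, ← nonzeroBlocks, card_nonzeroBlocks hP]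
  omega

theorem pairsCount_le (P : Finpartition (pmSet n)) : pairsCount n P ≤ n := by
  have := (card_filter_le P.parts fun C => negSet C ≠ C).trans P.card_parts_le_card
  rw [card_pmSet] at this
  exact Nat.div_le_of_le_mul this

theorem mem_positiveBlocks_or (hP : IsSignedPartition n P) (hC : C ∈ P.parts) :
    C ∈ positiveBlocks P ∨ negSet C ∈ positiveBlocks P ∨ negSet C = C := by
  by_cases hC0 : negSet C = C
  · exact Or.inr (Or.inr hC0)
  · have hC' : C ∈ nonzeroBlocks P := mem_nonzeroBlocks.2 ⟨hC, hC0⟩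
    rw [negSet_mem_positiveBlocks_iff hP hC']
    tauto

end Blocks

section BlockLabel

variable {P : Finpartition (pmSet n)} {C : Finset ℤ} (ℓ : positiveBlocks P → ℤ)

def blockLabel (C : Finset ℤ) : ℤ :=
  if h : C ∈ positiveBlocks P then ℓ ⟨C, h⟩
  else if h : negSet C ∈ positiveBlocks P then -ℓ ⟨negSet C, h⟩
  else 0

variable {ℓ}

theorem blockLabel_of_mem (h : C ∈ positiveBlocks P) : blockLabel ℓ C = ℓ ⟨C, h⟩ := by
  rw [blockLabel, dif_pos h]

theorem blockLabel_negSet (hP : IsSignedPartition n P) (hC : C ∈ P.parts) :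
    blockLabel ℓ (negSet C) = -blockLabel ℓ C := by
  by_cases hC0 : negSet C = C
  · simp [blockLabel, hC0, not_mem_positiveBlocks_of_negSet_eq hC0]
  have hC' : C ∈ nonzeroBlocks P := mem_nonzeroBlocks.2 ⟨hC, hC0⟩
  by_cases hpos : C ∈ positiveBlocks P
  · have := mt (negSet_mem_positiveBlocks_iff hP hC').1 (not_not.2 hpos)
    simp [blockLabel, hpos, this]
  · have := (negSet_mem_positiveBlocks_iff hP hC').2 hpos
    simp [blockLabel, hpos, this]

theorem blockLabel_eq_zero (hC0 : negSet C = C) : blockLabel ℓ C = 0 := by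
  simp [blockLabel, hC0, not_mem_positiveBlocks_of_negSet_eq hC0]

theorem abs_blockLabel_le (hℓ : ∀ D, |ℓ D| ≤ t) (C : Finset ℤ) : |blockLabel ℓ C| ≤ t := by
  unfold blockLabel
  split_ifs <;> simp [hℓ]

theorem exists_abs_blockLabel_eq (hP : IsSignedPartition n P) (hC : C ∈ P.parts)
    (hC0 : negSet C ≠ C) :
    ∃ D : positiveBlocks P, (C = D ∨ C = negSet D) ∧ |blockLabel ℓ C| = |ℓ D| := by
  rcases mem_positiveBlocks_or hP hC with hpos | hneg | hzero
  · exact ⟨⟨C, hpos⟩, Or.inl rfl, by rw [blockLabel_of_mem hpos]⟩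
  · refine ⟨⟨negSet C, hneg⟩, Or.inr (negSet_negSet C).symm, ?_⟩
    rw [← blockLabel_of_mem (ℓ := ℓ) hneg, blockLabel_negSet hP hC, abs_neg]
  · exact absurd hzero hC0

theorem blockLabel_injOn (hP : IsSignedPartition n P) (hℓ0 : ∀ D, ℓ D ≠ 0)
    (hℓ : ∀ D D', |ℓ D| = |ℓ D'| → D = D') : Set.InjOn (blockLabel ℓ) P.parts := by
  intro C hC C' hC' h
  by_cases hC0 : negSet C = C
  · by_cases hC0' : negSet C' = C'
    · exact card_le_one.1 hP.2 C (mem_filter.2 ⟨hC, hC0⟩) C' (mem_filter.2 ⟨hC', hC0'⟩)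
    · obtain ⟨D', -, hD'⟩ := exists_abs_blockLabel_eq (ℓ := ℓ) hP hC' hC0'
      rw [← h, blockLabel_eq_zero hC0, abs_zero, eq_comm, abs_eq_zero] at hD'
      exact absurd hD' (hℓ0 D')
  obtain ⟨D, hCD, hD⟩ := exists_abs_blockLabel_eq (ℓ := ℓ) hP hC hC0
  have hne : blockLabel ℓ C ≠ 0 := abs_pos.1 (hD ▸ abs_pos.2 (hℓ0 D))
  have hC0' : negSet C' ≠ C' := fun h0 => hne (h ▸ blockLabel_eq_zero h0)
  obtain ⟨D', hCD', hD'⟩ := exists_abs_blockLabel_eq (ℓ := ℓ) hP hC' hC0'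
  obtain rfl : D = D' := hℓ D D' (by rw [← hD, ← hD', h])
  obtain rfl | hC'C : C' = C ∨ C' = negSet C := by
    rcases hCD with rfl | rfl <;> rcases hCD' with rfl | rfl <;> simp
  · rfl
  · rw [hC'C, blockLabel_negSet hP hC] at h
    omega

end BlockLabel

section Fibre

variable {P : Finpartition (pmSet n)}

def signedSucc (j : Fin t) (b : Bool) : ℤ :=
  bif b then j + 1 else -(j + 1)

theorem abs_signedSucc (j : Fin t) (b : Bool) : |signedSucc j b| = j + 1 := by
  have : (0 : ℤ) ≤ j + 1 := by positivity
  cases b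
  · rw [signedSucc, cond_false, abs_neg, abs_of_nonneg this]
  · rw [signedSucc, cond_true, abs_of_nonneg this]

theorem signedSucc_inj {j j' : Fin t} {b b' : Bool} :
    signedSucc j b = signedSucc j' b' ↔ j = j' ∧ b = b' := by
  cases b <;> cases b' <;> simp [signedSucc, Fin.ext_iff] <;> omega

theorem exists_signedSucc_eq {ι : Type*} (ℓ : ι → ℤ) (h0 : ∀ i, ℓ i ≠ 0) (hle : ∀ i, |ℓ i| ≤ t)
    (hinj : ∀ i j, |ℓ i| = |ℓ j| → i = j) :
    ∃ ψ : ι ↪ Fin t, ∃ σ : ι → Bool, ∀ i, signedSucc (ψ i) (σ i) = ℓ i := by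
  have hlt : ∀ i, (|ℓ i| - 1).toNat < t := fun i => by
    have := abs_pos.2 (h0 i); have := hle i; omega
  refine ⟨⟨fun i => ⟨(|ℓ i| - 1).toNat, hlt i⟩, fun i j hij => hinj i j ?_⟩,
    fun i => decide (0 < ℓ i), fun i => ?_⟩
  · have := abs_pos.2 (h0 i); have := abs_pos.2 (h0 j)
    simp only [Fin.mk.injEq] at hij
    omega
  · rcases lt_or_gt_of_ne (h0 i) with hi | hi
    · simp [signedSucc, hi.not_gt, abs_of_neg hi]; omega
    · simp [signedSucc, hi, abs_of_pos hi]

noncomputable def ofUrnChoice (ψ : positiveBlocks P ↪ Fin t) (σ : positiveBlocks P → Bool) :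
    Fin n → Icc (-(t : ℤ)) t :=
  fun i => ⟨blockLabel (fun D => signedSucc (ψ D) (σ D)) (P.part (i + 1)),
    mem_Icc.2 <| abs_le.1 <| abs_blockLabel_le (fun D => by
      rw [abs_signedSucc]; exact_mod_cast (ψ D).isLt) _⟩

variable {ψ : positiveBlocks P ↪ Fin t} {σ : positiveBlocks P → Bool}

theorem ofUrnChoice_apply (i : Fin n) :
    (ofUrnChoice ψ σ i : ℤ) = blockLabel (fun D => signedSucc (ψ D) (σ D)) (P.part (i + 1)) :=
  rfl

theorem oddExtension_ofUrnChoice (hP : IsSignedPartition n P) {x : ℤ} (hx : x ∈ pmSet n) :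
    oddExtension (ofUrnChoice ψ σ) x =
      blockLabel (fun D => signedSucc (ψ D) (σ D)) (P.part x) :=
  oddExtension_eq_of_odd (g := fun x => blockLabel _ (P.part x))
    (fun x hx => by rw [hP.part_neg hx, blockLabel_negSet hP (P.part_mem.2 hx)]) (fun _ => rfl) hx

theorem kerPartition_ofUrnChoice (hP : IsSignedPartition n P) :
    kerPartition (ofUrnChoice ψ σ) = P := by
  refine kerPartition_eq_iff.2 fun x hx y hy => ?_
  rw [oddExtension_ofUrnChoice hP hx, oddExtension_ofUrnChoice hP hy]
  refine ⟨fun h => blockLabel_injOn hP (fun D => ?_) (fun D D' h => ?_) (P.part_mem.2 hx)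
    (P.part_mem.2 hy) h, congrArg _⟩
  · rw [← abs_pos, abs_signedSucc]; positivity
  · rw [abs_signedSucc, abs_signedSucc] at h
    exact ψ.injective (Fin.ext (by omega))

theorem ofUrnChoice_injective (hP : IsSignedPartition n P) :
    Function.Injective fun c : (positiveBlocks P ↪ Fin t) × (positiveBlocks P → Bool) =>
      ofUrnChoice c.1 c.2 := by
  rintro ⟨ψ, σ⟩ ⟨ψ', σ'⟩ h
  have key : ∀ D : positiveBlocks P, ψ D = ψ' D ∧ σ D = σ' D := fun D => by
    have hD := (mem_nonzeroBlocks.1 (mem_nonzeroBlocks_of_mem_positiveBlocks D.2)).1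
    obtain ⟨x, hx⟩ := P.nonempty_of_mem_parts hD
    have hxs := P.le hD hx
    have := congrArg (oddExtension · x) h
    simp only [oddExtension_ofUrnChoice hP hxs, P.part_eq_of_mem hD hx,
      blockLabel_of_mem D.2] at this
    exact signedSucc_inj.1 this
  exact Prod.ext (DFunLike.ext _ _ fun D => (key D).1) (funext fun D => (key D).2)

variable {f : Fin n → Icc (-(t : ℤ)) t}

theorem blockLabel_part_eq_oddExtension (hP : IsSignedPartition n P) (hf : kerPartition f = P)
    {ℓ : positiveBlocks P → ℤ} (hℓ : ∀ D : positiveBlocks P, ∀ y ∈ pmSet n, P.part y = D →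
      ℓ D = oddExtension f y) {x : ℤ} (hx : x ∈ pmSet n) :
    blockLabel ℓ (P.part x) = oddExtension f x := by
  have hx' := neg_mem_pmSet.2 hx
  rcases mem_positiveBlocks_or hP (P.part_mem.2 hx) with hpos | hneg | hzero
  · rw [blockLabel_of_mem hpos, hℓ _ x hx rfl]
  · rw [← neg_neg (blockLabel ℓ _), ← blockLabel_negSet hP (P.part_mem.2 hx),
      blockLabel_of_mem hneg, hℓ _ (-x) hx' (hP.part_neg hx), oddExtension_neg, neg_neg]
  · rw [blockLabel_eq_zero hzero]
    have := (kerPartition_eq_iff.1 hf x hx (-x) hx').2 (by rw [hP.part_neg hx, hzero])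
    rw [oddExtension_neg] at this
    omega

theorem oddExtension_ne_zero (hP : IsSignedPartition n P) (hf : kerPartition f = P) {x : ℤ}
    (hx : x ∈ pmSet n) (hx0 : negSet (P.part x) ≠ P.part x) : oddExtension f x ≠ 0 := by
  intro h0
  apply hx0
  rw [← hP.part_neg hx]
  exact (kerPartition_eq_iff.1 hf _ (neg_mem_pmSet.2 hx) _ hx).1
    (by rw [oddExtension_neg, h0, neg_zero])

theorem part_eq_of_abs_oddExtension_eq (hP : IsSignedPartition n P) (hf : kerPartition f = P)
    {x y : ℤ} (hx : x ∈ pmSet n) (hy : y ∈ pmSet n) (hxP : P.part x ∈ positiveBlocks P)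
    (hyP : P.part y ∈ positiveBlocks P) (h : |oddExtension f x| = |oddExtension f y|) :
    P.part x = P.part y := by
  have hker := kerPartition_eq_iff.1 hf
  rcases abs_eq_abs.1 h with h | h
  · exact (hker x hx y hy).1 h
  · have hxy : P.part x = negSet (P.part y) := by
      rw [← hP.part_neg hy, ← hker x hx _ (neg_mem_pmSet.2 hy), oddExtension_neg, h]
    rw [hxy, negSet_mem_positiveBlocks_iff hP (mem_nonzeroBlocks_of_mem_positiveBlocks hyP)] at hxP
    exact absurd hyP hxP

theorem exists_ofUrnChoice_eq (hP : IsSignedPartition n P) (hf : kerPartition f = P) :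
    ∃ ψ : positiveBlocks P ↪ Fin t, ∃ σ : positiveBlocks P → Bool, ofUrnChoice ψ σ = f := by
  have hparts : ∀ D : positiveBlocks P, (D : Finset ℤ) ∈ P.parts ∧ negSet D ≠ D :=
    fun D => mem_nonzeroBlocks.1 (mem_nonzeroBlocks_of_mem_positiveBlocks D.2)
  choose x hx using fun D => P.nonempty_of_mem_parts (hparts D).1
  have hxs : ∀ D, x D ∈ pmSet n := fun D => P.le (hparts D).1 (hx D)
  have hpart : ∀ D, P.part (x D) = D := fun D => P.part_eq_of_mem (hparts D).1 (hx D)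
  obtain ⟨ψ, σ, hψσ⟩ := exists_signedSucc_eq (fun D => oddExtension f (x D))
    (fun D => oddExtension_ne_zero hP hf (hxs D) (by rw [hpart]; exact (hparts D).2))
    (fun D => abs_oddExtension_le _)
    (fun D D' h => Subtype.ext <| by
      rw [← hpart D, ← hpart D']
      exact part_eq_of_abs_oddExtension_eq hP hf (hxs D) (hxs D') (by rw [hpart]; exact D.2)
        (by rw [hpart]; exact D'.2) h)
  refine ⟨ψ, σ, funext fun i => Subtype.ext ?_⟩
  rw [ofUrnChoice_apply, funext hψσ, blockLabel_part_eq_oddExtension hP hf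
    (fun D y hy h => (kerPartition_eq_iff.1 hf _ (hxs D) y hy).2 (by rw [h, hpart])),
    oddExtension_natCast_add_one]
  exact mem_pmSet.2 ⟨by omega, by omega⟩

theorem card_fiber_kerPartition (hP : IsSignedPartition n P) :
    Nat.card {f : Fin n → Icc (-(t : ℤ)) t // kerPartition f = P} =
      2 ^ pairsCount n P * t.descFactorial (pairsCount n P) := by
  classical
  rw [← Nat.card_eq_of_bijective (fun c : (positiveBlocks P ↪ Fin t) × (positiveBlocks P → Bool) =>
      (⟨ofUrnChoice c.1 c.2, kerPartition_ofUrnChoice hP⟩ : {f // kerPartition f = P}))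
    ⟨fun c c' h => ofUrnChoice_injective hP (congrArg Subtype.val h),
      fun ⟨f, hf⟩ => (exists_ofUrnChoice_eq hP hf).elim fun ψ ⟨σ, h⟩ => ⟨(ψ, σ), Subtype.ext h⟩⟩]
  simp [Nat.card_eq_fintype_card, Fintype.card_embedding_eq, pairsCount_eq_card_positiveBlocks hP]
  ring

end Fibre

instance : DecidablePred (IsSignedPartition n) := fun P => by
  unfold IsSignedPartition; infer_instance

theorem prod_range_sub_odd (t k : ℕ) :
    ∏ j ∈ range k, (2 * t + 1 - (2 * j + 1)) = 2 ^ k * t.descFactorial k := by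
  rw [Nat.descFactorial_eq_prod_range, ← card_range k, ← prod_const, card_range,
    ← prod_mul_distrib]
  exact prod_congr rfl fun j _ => by omega

theorem pairsCount_kerPartition_le (f : Fin n → Icc (-(t : ℤ)) t) :
    pairsCount n (kerPartition f) ≤ t := by
  have hpos : 0 < Nat.card {g : Fin n → Icc (-(t : ℤ)) t // kerPartition g = kerPartition f} :=
    Nat.card_pos_iff.2 ⟨⟨⟨f, rfl⟩⟩, inferInstance⟩
  rw [card_fiber_kerPartition (isSignedPartition_kerPartition f)] at hpos
  by_contra! hlt
  rw [Nat.descFactorial_eq_zero_iff_lt.2 hlt, mul_zero] at hpos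
  exact lt_irrefl 0 hpos

theorem two_mul_add_one_pow_eq_sum (n t : ℕ) :
    (2 * t + 1) ^ n = ∑ P : {P : Finpartition (pmSet n) //
      IsSignedPartition n P ∧ 2 * pairsCount n P < 2 * t + 1},
        ∏ j ∈ range (pairsCount n P.1), (2 * t + 1 - (2 * j + 1)) := by
  let Φ : (Fin n → Icc (-(t : ℤ)) t) → {P : Finpartition (pmSet n) //
      IsSignedPartition n P ∧ 2 * pairsCount n P < 2 * t + 1} := fun f =>
    ⟨kerPartition f, isSignedPartition_kerPartition f,
      by have := pairsCount_kerPartition_le f; omega⟩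
  calc (2 * t + 1) ^ n = Nat.card (Fin n → Icc (-(t : ℤ)) t) := by
        rw [Nat.card_eq_fintype_card, Fintype.card_fun, Fintype.card_coe, Int.card_Icc,
          Fintype.card_fin]
        congr 1
        omega
    _ = ∑ P, Nat.card {f // Φ f = P} := by
        rw [← Nat.card_sigma, Nat.card_congr (Equiv.sigmaFiberEquiv Φ)]
    _ = _ := by
      refine sum_congr rfl fun P _ => ?_
      rw [prod_range_sub_odd, ← card_fiber_kerPartition P.2.1]
      exact Nat.card_congr (Equiv.subtypeEquivRight fun f => Subtype.ext_iff)

theorem SB_eq_card (n k : ℕ) :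
    SB n k = #{P : Finpartition (pmSet n) | IsSignedPartition n P ∧ pairsCount n P = k} := by
  rw [SB, ← Fintype.card_subtype, ← Nat.card_eq_fintype_card]
  refine Nat.card_congr (Equiv.subtypeEquivRight fun P => and_congr_right fun hP => ?_)
  rw [← nonzeroBlocks, card_nonzeroBlocks hP, pairsCount_eq_card_positiveBlocks hP]
  omega

theorem sum_pairsCount_eq_sum_SB (n m : ℕ) (w : ℕ → ℕ) (hw : ∀ k, m ≤ 2 * k → w k = 0) :
    ∑ P : {P : Finpartition (pmSet n) // IsSignedPartition n P ∧ 2 * pairsCount n P < m},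
      w (pairsCount n P.1) = ∑ k ∈ range (n + 1), SB n k * w k := by
  rw [← sum_subtype _ (fun P => mem_filter.trans (and_iff_right (mem_univ P)))
      fun P => w (pairsCount n P),
    ← filter_filter, sum_filter_of_ne fun P _ h => not_le.1 (mt (hw _) h),
    ← sum_fiberwise_of_maps_to (g := pairsCount n) (t := range (n + 1))
      fun P _ => mem_range_succ_iff.2 (pairsCount_le P)]
  refine sum_congr rfl fun k _ => ?_
  rw [SB_eq_card, filter_filter, sum_const_nat fun P hP => by rw [(mem_filter.1 hP).2.2]]

/-- Bagno–Garber's balls-into-urns correspondence: for odd `m`, functions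
`[n] → [m]` are in bijection with pairs `(P, c)` of a signed partition `P` of
`[±n]` with `k` pairs of nonzero blocks, `2k < m`, together with a choice
sequence with `m - (2j-1)` options for the `j`-th pair (`j = 1,…,k`);
consequently `m^n = Σ_k S_B(n,k)·(m-1)(m-3)⋯(m-2k+1)`. -/
theorem balls_into_urns_bijection (n m : ℕ) (hm : Odd m) :
    Nonempty ((Fin n → Fin m) ≃
      (Σ P : {P : Finpartition (pmSet n) //
          IsSignedPartition n P ∧ 2 * pairsCount n P < m},
        (j : Fin (pairsCount n P.1)) → Fin (m - (2 * (j : ℕ) + 1)))) ∧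
    m ^ n = ∑ k ∈ Finset.range (n + 1),
      SB n k * ∏ j ∈ Finset.range k, (m - (2 * j + 1)) := by
  obtain ⟨t, rfl⟩ := hm
  refine ⟨⟨Fintype.equivOfCardEq ?_⟩, ?_⟩
  · simp only [Fintype.card_sigma, Fintype.card_pi, Fintype.card_fin, prod_const, card_univ,
      Fin.prod_univ_eq_prod_range (fun j => 2 * t + 1 - (2 * j + 1))]
    exact two_mul_add_one_pow_eq_sum n t
  · rw [two_mul_add_one_pow_eq_sum, sum_pairsCount_eq_sum_SB _ _
      fun k => ∏ j ∈ range k, (2 * t + 1 - (2 * j + 1))]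
    exact fun k hk => prod_eq_zero (mem_range.2 (show t < k by omega)) (by omega)
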